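/- There exist real numbers δ ∈ (0, 1/3) and c₀ > 0 such that for every s ∈ (2/3 − δ, 1] and every t ∈ ℝ, (F_s'(t))² ≤ c₀·G_s'(t), where G_s = F_s·F_s'. -/

import Mathlib

/-!
On `(0, 1]` one has `F_s(t) = t^(s+1/2) q(t)` with `q(t) = 3/8 t² - 5/4 t + 15/8`, and on
`[1, ∞)` `F_s(t) = t^s`. The branches of `F_s` and of `G_s = F_s F_s'` have matching derivatives
at `1`, so `F_s'(t) = t^(s-1/2) P(s, t)` and `G_s'(t) = t^(2s-1) Q(s, t)` on `(0, 1]` for explicit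
polynomials `P` and `Q`, and the inequality with `c₀ = 100` reduces there to `P² ≤ 100 Q`, which
holds for `t ∈ [0, 1]` once `s ≥ 33/50 = 2/3 - 1/150`. On `[1, ∞)` it reduces to
`s² ≤ 100 s (2s - 1)`. At `0` both derivatives vanish since `|F_s(t)| ≲ |t|^(s+1/2)` and
`|G_s(t)| ≲ |t|^(2s)` with exponents `> 1`, and negative `t` follow because `F_s` is even and
`G_s` odd.
-/

/-- The cutoff function `θ` of Definition 4.3: `θ(t) = (3/8)|t|^{1/2}(|t|² − (10/3)|t| + 5)`
for `|t| ≤ 1` and `θ(t) = 1` for `|t| > 1`. -/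
noncomputable def theta (t : ℝ) : ℝ :=
  if |t| ≤ 1 then (3 / 8) * |t| ^ ((1 : ℝ) / 2) * (|t| ^ 2 - (10 / 3) * |t| + 5) else 1

/-- The auxiliary function `F_s(t) = θ(t)·|t|^s` of Definition 4.3. -/
noncomputable def Fs (s t : ℝ) : ℝ := theta t * |t| ^ s

open Set Filter Topology

theorem Function.Even.deriv {f : ℝ → ℝ} (hf : f.Even) : (deriv f).Odd := fun x => by
  have h := deriv_comp_neg (f := f) (x := x)
  simp only [hf.eq] at h
  rw [h, neg_neg]

theorem Function.Odd.deriv {f : ℝ → ℝ} (hf : f.Odd) : (deriv f).Even := fun x => by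
  have h := deriv_comp_neg (f := f) (x := x)
  simp only [hf.eq, deriv.fun_neg] at h
  linarith

theorem hasDerivAt_rpow_mul {g : ℝ → ℝ} {g' a t : ℝ} (ht : 0 < t) (hg : HasDerivAt g g' t) :
    HasDerivAt (fun x => x ^ a * g x) (t ^ (a - 1) * (a * g t + t * g')) t := by
  refine ((Real.hasDerivAt_rpow_const (p := a) (Or.inl ht.ne')).mul hg).congr_deriv ?_
  rw [Real.rpow_sub_one ht.ne']
  field_simp

theorem hasDerivAt_quadratic (a b c t : ℝ) :
    HasDerivAt (fun x => a * x ^ 2 - b * x + c) (2 * a * t - b) t := by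
  refine ((((hasDerivAt_pow 2 t).const_mul a).fun_sub
    ((hasDerivAt_id' t).const_mul b)).add_const c).congr_deriv ?_
  ring

theorem hasDerivAt_of_eqOn_Ioc_Ici {f g h g' h' : ℝ → ℝ} {a b : ℝ} (hab : a < b)
    (hfg : EqOn f g (Ioc a b)) (hfh : EqOn f h (Ici b))
    (hg : ∀ t ∈ Ioc a b, HasDerivAt g (g' t) t) (hh : ∀ t ∈ Ici b, HasDerivAt h (h' t) t)
    (hb : g' b = h' b) :
    (∀ t ∈ Ioc a b, HasDerivAt f (g' t) t) ∧ ∀ t ∈ Ici b, HasDerivAt f (h' t) t := by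
  have hbmem : b ∈ Ioc a b := ⟨hab, le_rfl⟩
  have glue : HasDerivAt f (g' b) b := by
    have hl : HasDerivWithinAt f (g' b) (Iic b) b :=
      (hg b hbmem).hasDerivWithinAt.congr_of_eventuallyEq
        (mem_of_superset (Ioc_mem_nhdsLE hab) hfg) (hfg hbmem)
    have hr : HasDerivWithinAt f (g' b) (Ici b) b :=
      hb ▸ (hh b self_mem_Ici).hasDerivWithinAt.congr (fun _ hx => hfh hx) (hfh self_mem_Ici)
    simpa using hl.union hr
  constructor
  · rintro t ⟨hat, htb⟩
    rcases htb.lt_or_eq with htb | rfl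
    · exact (hg t ⟨hat, htb.le⟩).congr_of_eventuallyEq <|
        mem_of_superset (Ioo_mem_nhds hat htb) fun x hx => hfg (Ioo_subset_Ioc_self hx)
    · exact glue
  · rintro t (htb : b ≤ t)
    rcases htb.lt_or_eq with htb | rfl
    · exact (hh t htb.le).congr_of_eventuallyEq <|
        mem_of_superset (Ioi_mem_nhds htb) fun _ hx => hfh (mem_Ici_of_Ioi hx)
    · exact hb ▸ glue

theorem hasDerivAt_zero_of_abs_le_rpow {f : ℝ → ℝ} {C p : ℝ} (hp : 1 < p)
    (hf : ∀ᶠ x in 𝓝 0, |f x| ≤ C * |x| ^ p) : HasDerivAt f 0 0 := by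
  have hf0 : f 0 = 0 := by
    simpa [Real.zero_rpow (by linarith : p ≠ 0)] using hf.self_of_nhds
  rw [hasDerivAt_iff_tendsto_slope]
  refine squeeze_zero_norm' (a := fun x => C * |x| ^ (p - 1)) ?_ ?_
  · filter_upwards [nhdsWithin_le_nhds hf, self_mem_nhdsWithin] with x hx (hx0 : x ≠ 0)
    have hx0' : 0 < |x| := abs_pos.2 hx0
    rw [slope_def_field, hf0, sub_zero, sub_zero, Real.norm_eq_abs, abs_div,
      div_le_iff₀ hx0', mul_assoc, ← Real.rpow_add_one hx0'.ne', sub_add_cancel]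
    exact hx
  · have hc : Continuous fun x : ℝ => C * |x| ^ (p - 1) :=
      (continuous_abs.rpow_const fun _ => Or.inr (by linarith)).const_mul C
    simpa [Real.zero_rpow (by linarith : p - 1 ≠ 0)] using
      (hc.tendsto 0).mono_left nhdsWithin_le_nhds

noncomputable def thetaPoly (t : ℝ) : ℝ := 3 / 8 * t ^ 2 - 5 / 4 * t + 15 / 8

noncomputable def dFsPoly (s t : ℝ) : ℝ :=
  3 / 8 * (s + 5 / 2) * t ^ 2 - 5 / 4 * (s + 3 / 2) * t + 15 / 8 * (s + 1 / 2)

noncomputable def dGsPoly (s t : ℝ) : ℝ :=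
  2 * s * (thetaPoly t * dFsPoly s t) + t * ((2 * (3 / 8) * t - 5 / 4) * dFsPoly s t +
    thetaPoly t * (2 * (3 / 8 * (s + 5 / 2)) * t - 5 / 4 * (s + 3 / 2)))

noncomputable def Gs (s t : ℝ) : ℝ := Fs s t * deriv (Fs s) t

theorem thetaPoly_mem_Icc {t : ℝ} (ht : t ∈ Icc (0 : ℝ) 1) :
    thetaPoly t ∈ Icc 1 (15 / 8) := by
  obtain ⟨ht0, ht1⟩ := ht
  constructor <;> unfold thetaPoly <;> nlinarith

theorem Fs_abs (s t : ℝ) : Fs s |t| = Fs s t := by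
  simp [Fs, theta]

theorem Fs_even (s : ℝ) : (Fs s).Even := fun t => by
  rw [← Fs_abs, abs_neg, Fs_abs]

theorem Fs_zero {s : ℝ} (hs : s ≠ 0) : Fs s 0 = 0 := by
  simp [Fs, Real.zero_rpow hs]

theorem Fs_eqOn_Ioc (s : ℝ) : EqOn (Fs s) (fun t => t ^ (s + 1 / 2) * thetaPoly t) (Ioc 0 1) := by
  rintro t ⟨ht0, ht1⟩
  simp only [Fs, theta, abs_of_pos ht0, if_pos ht1, thetaPoly, Real.rpow_add ht0]
  ring

theorem Fs_eqOn_Ici (s : ℝ) : EqOn (Fs s) (fun t => t ^ s) (Ici 1) := by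
  intro t (ht : 1 ≤ t)
  rcases ht.lt_or_eq with ht | rfl
  · simp [Fs, theta, abs_of_pos (one_pos.trans ht), not_le.2 ht]
  · norm_num [Fs, theta]

theorem hasDerivAt_Fs (s : ℝ) :
    (∀ t ∈ Ioc (0 : ℝ) 1, HasDerivAt (Fs s) (t ^ (s - 1 / 2) * dFsPoly s t) t) ∧
      ∀ t ∈ Ici (1 : ℝ), HasDerivAt (Fs s) (s * t ^ (s - 1)) t := by
  refine hasDerivAt_of_eqOn_Ioc_Ici one_pos (Fs_eqOn_Ioc s) (Fs_eqOn_Ici s)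
    (fun t ht => ?_) (fun t ht => Real.hasDerivAt_rpow_const (Or.inl ?_))
    (by norm_num [dFsPoly]; ring)
  · refine (hasDerivAt_rpow_mul ht.1 (hasDerivAt_quadratic _ _ _ t)).congr_deriv ?_
    rw [show s + 1 / 2 - 1 = s - 1 / 2 by ring]
    simp only [dFsPoly]
    ring
  · exact (one_pos.trans_le ht).ne'

theorem Gs_eqOn_Ioc (s : ℝ) :
    EqOn (Gs s) (fun t => t ^ (2 * s) * (thetaPoly t * dFsPoly s t)) (Ioc 0 1) := by
  intro t ht
  rw [Gs, Fs_eqOn_Ioc s ht, ((hasDerivAt_Fs s).1 t ht).deriv]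
  have : t ^ (2 * s) = t ^ (s + 1 / 2) * t ^ (s - 1 / 2) := by
    rw [← Real.rpow_add ht.1]; ring_nf
  simp only [this]; ring

theorem Gs_eqOn_Ici (s : ℝ) : EqOn (Gs s) (fun t => s * t ^ (2 * s - 1)) (Ici 1) := by
  intro t ht
  rw [Gs, Fs_eqOn_Ici s ht, ((hasDerivAt_Fs s).2 t ht).deriv]
  have : t ^ (2 * s - 1) = t ^ s * t ^ (s - 1) := by
    rw [← Real.rpow_add (one_pos.trans_le ht)]; ring_nf
  simp only [this]; ring

theorem hasDerivAt_Gs (s : ℝ) :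
    (∀ t ∈ Ioc (0 : ℝ) 1, HasDerivAt (Gs s) (t ^ (2 * s - 1) * dGsPoly s t) t) ∧
      ∀ t ∈ Ici (1 : ℝ), HasDerivAt (Gs s) (s * (2 * s - 1) * t ^ (2 * s - 2)) t := by
  refine hasDerivAt_of_eqOn_Ioc_Ici one_pos (Gs_eqOn_Ioc s) (Gs_eqOn_Ici s)
    (fun t ht => ?_) (fun t ht => ?_) (by norm_num [dGsPoly, dFsPoly, thetaPoly]; ring)
  · exact hasDerivAt_rpow_mul ht.1
      ((hasDerivAt_quadratic _ _ _ t).mul (hasDerivAt_quadratic _ _ _ t))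
  · have ht0 : t ≠ 0 := (one_pos.trans_le ht).ne'
    refine ((Real.hasDerivAt_rpow_const (Or.inl ht0)).const_mul s).congr_deriv ?_
    ring_nf

theorem Gs_odd (s : ℝ) : (Gs s).Odd := (Fs_even s).mul_odd (Fs_even s).deriv

theorem abs_Fs_le {s x : ℝ} (hs : s ≠ 0) (hx : |x| ≤ 1) :
    |Fs s x| ≤ 15 / 8 * |x| ^ (s + 1 / 2) := by
  rw [← Fs_abs]
  rcases (abs_nonneg x).eq_or_lt with h | h
  · rw [← h, Fs_zero hs, abs_zero]
    positivity
  · obtain ⟨hq1, hq2⟩ := thetaPoly_mem_Icc ⟨h.le, hx⟩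
    rw [Fs_eqOn_Ioc s ⟨h, hx⟩, abs_of_nonneg (by positivity)]
    beta_reduce
    rw [mul_comm]
    gcongr

theorem exists_abs_Gs_le {s : ℝ} (hs : s ≠ 0) :
    ∃ C, ∀ x, |x| ≤ 1 → |Gs s x| ≤ C * |x| ^ (2 * s) := by
  obtain ⟨C, hC⟩ := (isCompact_Icc (a := (0 : ℝ)) (b := 1)).exists_bound_of_continuousOn
    (f := fun t => thetaPoly t * dFsPoly s t) (by unfold thetaPoly dFsPoly; fun_prop)
  refine ⟨C, fun x hx => ?_⟩
  have habs : |Gs s x| = |Gs s (|x|)| := by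
    rcases le_total 0 x with h | h
    · rw [abs_of_nonneg h]
    · rw [abs_of_nonpos h, Gs_odd s, abs_neg]
  rcases (abs_nonneg x).eq_or_lt with h | h
  · rw [habs, ← h, Gs, Fs_zero hs, zero_mul, abs_zero, Real.zero_rpow (by simpa using hs),
      mul_zero]
  · rw [habs, Gs_eqOn_Ioc s ⟨h, hx⟩, abs_mul, abs_of_pos (by positivity), mul_comm]
    gcongr
    exact hC _ ⟨h.le, hx⟩

theorem hasDerivAt_Fs_zero {s : ℝ} (hs : 1 / 2 < s) : HasDerivAt (Fs s) 0 0 :=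
  hasDerivAt_zero_of_abs_le_rpow (by linarith : 1 < s + 1 / 2) <| by
    filter_upwards [Icc_mem_nhds neg_one_lt_zero one_pos] with x hx
    exact abs_Fs_le (by linarith) (abs_le.2 hx)

theorem hasDerivAt_Gs_zero {s : ℝ} (hs : 1 / 2 < s) : HasDerivAt (Gs s) 0 0 := by
  obtain ⟨C, hC⟩ := exists_abs_Gs_le (by linarith : s ≠ 0)
  refine hasDerivAt_zero_of_abs_le_rpow (C := C) (by linarith : 1 < 2 * s) ?_
  filter_upwards [Icc_mem_nhds neg_one_lt_zero one_pos] with x hx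
  exact hC x (abs_le.2 hx)

theorem sq_dFsPoly_le {s t : ℝ} (hs : 33 / 50 ≤ s) (ht : t ∈ Icc (0 : ℝ) 1) :
    dFsPoly s t ^ 2 ≤ 100 * dGsPoly s t := by
  obtain ⟨hq, -⟩ := thetaPoly_mem_Icc ht
  -- `100 * dGsPoly s t - dFsPoly s t ^ 2` is quadratic in `s`: it equals its value at
  -- `s = 33 / 50`, the quartic in `hmin`, plus `(s - 33 / 50)` times the bracket in `hslope`.
  have hmin : 0 ≤ 853731 / 1600 - 358701 / 200 * t + 8466021 / 4000 * t ^ 2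
      - 1070901 / 1000 * t ^ 3 + 9400131 / 40000 * t ^ 4 := by
    nlinarith [sq_nonneg (t ^ 2 - 114 / 50 * t + 6 / 5), sq_nonneg (t - 19 / 25),
      sq_nonneg (t ^ 2 - 114 / 50 * t + 1), sq_nonneg (t ^ 2 - 23 / 10 * t + 13 / 10),
      sq_nonneg (t - 1), sq_nonneg t]
  have hslope : 0 ≤ 199 * thetaPoly t ^ 2 * (s + 33 / 50)
      + 2 * thetaPoly t * (99 * (15 / 16 * (t - 1) ^ 2) + 50 * (3 / 2 * t ^ 2 - 5 / 2 * t)) := by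
    nlinarith [mul_nonneg (by linarith : 0 ≤ thetaPoly t) (sq_nonneg (t - 1)),
      mul_le_mul hq hq zero_le_one (by linarith : 0 ≤ thetaPoly t)]
  simp only [dGsPoly, dFsPoly, thetaPoly] at hslope ⊢
  linear_combination hmin + mul_nonneg (sub_nonneg.2 hs) hslope

theorem sq_deriv_Fs_le_of_mem_Ioc {s t : ℝ} (hs : 33 / 50 ≤ s) (ht : t ∈ Ioc (0 : ℝ) 1) :
    deriv (Fs s) t ^ 2 ≤ 100 * deriv (Gs s) t := by
  rw [((hasDerivAt_Fs s).1 t ht).deriv, ((hasDerivAt_Gs s).1 t ht).deriv]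
  have hsq : (t ^ (s - 1 / 2)) ^ 2 = t ^ (2 * s - 1) := by
    rw [← Real.rpow_mul_natCast ht.1.le]; ring_nf
  rw [mul_pow, hsq, mul_left_comm]
  exact mul_le_mul_of_nonneg_left (sq_dFsPoly_le hs ⟨ht.1.le, ht.2⟩)
    (Real.rpow_nonneg ht.1.le _)

theorem sq_deriv_Fs_le_of_one_le {s t : ℝ} (hs : 100 / 199 ≤ s) (ht : 1 ≤ t) :
    deriv (Fs s) t ^ 2 ≤ 100 * deriv (Gs s) t := by
  rw [((hasDerivAt_Fs s).2 t ht).deriv, ((hasDerivAt_Gs s).2 t ht).deriv]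
  have hsq : (t ^ (s - 1)) ^ 2 = t ^ (2 * s - 2) := by
    rw [← Real.rpow_mul_natCast (by linarith)]; ring_nf
  rw [mul_pow, hsq, ← mul_assoc]
  exact mul_le_mul_of_nonneg_right (by nlinarith) (Real.rpow_nonneg (by linarith) _)

theorem sq_deriv_Fs_le {s : ℝ} (hs : 33 / 50 ≤ s) (t : ℝ) :
    deriv (Fs s) t ^ 2 ≤ 100 * deriv (Gs s) t := by
  wlog ht : 0 ≤ t
  · have := this hs (-t) (by linarith)
    rwa [(Fs_even s).deriv, (Gs_odd s).deriv, neg_sq] at this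
  rcases ht.eq_or_lt with rfl | ht0
  · rw [(hasDerivAt_Fs_zero (by linarith)).deriv, (hasDerivAt_Gs_zero (by linarith)).deriv]
    norm_num
  rcases le_total t 1 with ht1 | ht1
  · exact sq_deriv_Fs_le_of_mem_Ioc hs ⟨ht0, ht1⟩
  · exact sq_deriv_Fs_le_of_one_le (by linarith) ht1

/-- There are `δ ∈ (0, 1/3)` and `c₀ > 0` such that for every `s ∈ (2/3 − δ, 1]` and every
`t ∈ ℝ`, `(F_s'(t))² ≤ c₀ · G_s'(t)`, where `G_s = F_s · F_s'`. -/
theorem stmt_14 :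
    ∃ δ c₀ : ℝ, 0 < δ ∧ δ < 1 / 3 ∧ 0 < c₀ ∧
      ∀ s : ℝ, 2 / 3 - δ < s → s ≤ 1 → ∀ t : ℝ,
        (deriv (Fs s) t) ^ 2 ≤ c₀ * deriv (fun u => Fs s u * deriv (Fs s) u) t :=
  ⟨1 / 150, 100, by norm_num, by norm_num, by norm_num,
    fun _ hs _ => sq_deriv_Fs_le (by linarith)⟩
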